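/- In the conjugate gradient algorithm applied to A x = b with symmetric positive definite A, the residual vectors are pairwise orthogonal: r_iᵀ r_j = 0 for all i ≠ j with i, j ≤ K. -/

import Mathlib

open Matrix

/-!
Residual orthogonality and `A`-conjugacy of the search directions are proved together by
induction. Since `r (k+1) = r k - γ_k • A p_k` and, by conjugacy, `r m ⬝ᵥ A p_k = p m ⬝ᵥ A p_k`
for `m ≤ k`, the new residual is orthogonal to all earlier ones (for `m = k` this is exactly the
choice of `γ_k`). Conversely `γ_i • A p_i = r i - r (i+1)`, so `r (k+1) ⬝ᵥ A p_i = 0` for `i < k`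
and the new direction `p (k+1)` is conjugate to `p i`; for `i = k` the choice of `β_{k+1}` cancels
the remaining term.
-/

theorem Matrix.IsSymm.dotProduct_mulVec_comm {ι R : Type*} [Fintype ι] [CommSemiring R]
    {A : Matrix ι ι R} (hA : A.IsSymm) (u v : ι → R) : u ⬝ᵥ (A *ᵥ v) = v ⬝ᵥ (A *ᵥ u) := by
  rw [dotProduct_mulVec, dotProduct_comm, ← mulVec_transpose, hA.eq]

namespace ConjugateGradient

variable {ι 𝕜 : Type*} [Fintype ι] [Field 𝕜]

def stepSize (A : Matrix ι ι 𝕜) (r p : ℕ → ι → 𝕜) (k : ℕ) : 𝕜 :=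
  (r k ⬝ᵥ r k) / (p k ⬝ᵥ (A *ᵥ p k))

/-- The paper's `β_{k+1}` (note the index shift). -/
def directionCoeff (r : ℕ → ι → 𝕜) (k : ℕ) : 𝕜 :=
  (r (k + 1) ⬝ᵥ r (k + 1)) / (r k ⬝ᵥ r k)

structure IsCGSequence (A : Matrix ι ι 𝕜) (r p : ℕ → ι → 𝕜) : Prop where
  dir_zero : p 0 = r 0
  residual_succ : ∀ k, r (k + 1) = r k - stepSize A r p k • (A *ᵥ p k)
  dir_succ : ∀ k, p (k + 1) = r (k + 1) + directionCoeff r k • p k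

namespace IsCGSequence

variable {A : Matrix ι ι 𝕜} {r p : ℕ → ι → 𝕜}

theorem residual_succ_eq_sub (hcg : IsCGSequence A r p) (k : ℕ) :
    r (k + 1) = p (k + 1) - directionCoeff r k • p k :=
  eq_sub_of_add_eq (hcg.dir_succ k).symm

theorem stepSize_mul_dotProduct_mulVec (hcg : IsCGSequence A r p) (v : ι → 𝕜) (k : ℕ) :
    stepSize A r p k * (v ⬝ᵥ (A *ᵥ p k)) = v ⬝ᵥ r k - v ⬝ᵥ r (k + 1) := by
  rw [hcg.residual_succ, dotProduct_sub, dotProduct_smul, smul_eq_mul]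
  ring

theorem residual_dotProduct_mulVec_eq (hcg : IsCGSequence A r p) {k m : ℕ}
    (hconj : ∀ i < k, p i ⬝ᵥ (A *ᵥ p k) = 0) (hm : m ≤ k) :
    r m ⬝ᵥ (A *ᵥ p k) = p m ⬝ᵥ (A *ᵥ p k) := by
  cases m with
  | zero => rw [hcg.dir_zero]
  | succ m =>
    rw [hcg.residual_succ_eq_sub, sub_dotProduct, smul_dotProduct, hconj m (by omega),
      smul_zero, sub_zero]

theorem dotProduct_residual_succ_eq_zero (hcg : IsCGSequence A r p) {k m : ℕ}
    (hr : ∀ i < k, r i ⬝ᵥ r k = 0) (hconj : ∀ i < k, p i ⬝ᵥ (A *ᵥ p k) = 0)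
    (hpAp : p k ⬝ᵥ (A *ᵥ p k) ≠ 0) (hm : m ≤ k) :
    r m ⬝ᵥ r (k + 1) = 0 := by
  have key := hcg.stepSize_mul_dotProduct_mulVec (r m) k
  rw [hcg.residual_dotProduct_mulVec_eq hconj hm] at key
  rcases hm.lt_or_eq with hm | rfl
  · rw [hconj m hm, hr m hm, mul_zero] at key
    linear_combination key
  · rw [stepSize, div_mul_cancel₀ _ hpAp] at key
    linear_combination key

theorem dotProduct_mulVec_dir_succ_eq_zero (hcg : IsCGSequence A r p) (hA : A.IsSymm)
    {k i : ℕ} (hr : ∀ m ≤ k, r m ⬝ᵥ r (k + 1) = 0) (hconj : ∀ m < k, p m ⬝ᵥ (A *ᵥ p k) = 0)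
    (hnd : ∀ m ≤ k, r m ⬝ᵥ r m ≠ 0 ∧ p m ⬝ᵥ (A *ᵥ p m) ≠ 0) (hi : i ≤ k) :
    p i ⬝ᵥ (A *ᵥ p (k + 1)) = 0 := by
  obtain ⟨hrr, hpAp⟩ := hnd i hi
  have key := hcg.stepSize_mul_dotProduct_mulVec (r (k + 1)) i
  rw [hA.dotProduct_mulVec_comm, hcg.dir_succ, add_dotProduct, smul_dotProduct, smul_eq_mul,
    hA.dotProduct_mulVec_comm (p k)]
  rcases hi.lt_or_eq with hi | rfl
  · rw [dotProduct_comm _ (r i), hr i hi.le, dotProduct_comm _ (r (i + 1)), hr (i + 1) hi,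
      sub_zero] at key
    rw [hconj i hi, mul_zero, add_zero]
    exact (mul_eq_zero.mp key).resolve_left (div_ne_zero hrr hpAp)
  · rw [dotProduct_comm _ (r i), hr i le_rfl, zero_sub, stepSize] at key
    rw [directionCoeff]
    field_simp at key ⊢
    linear_combination key

theorem orthogonal_and_conjugate (hcg : IsCGSequence A r p) (hA : A.IsSymm) {K : ℕ}
    (hnd : ∀ k < K, r k ⬝ᵥ r k ≠ 0 ∧ p k ⬝ᵥ (A *ᵥ p k) ≠ 0) :
    ∀ j ≤ K, ∀ i < j, r i ⬝ᵥ r j = 0 ∧ p i ⬝ᵥ (A *ᵥ p j) = 0 := by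
  intro j
  induction j with
  | zero => exact fun _ i hi => absurd hi (Nat.not_lt_zero i)
  | succ j ih =>
    intro hj i hi
    have hr : ∀ m < j, r m ⬝ᵥ r j = 0 := fun m hm => (ih (by omega) m hm).1
    have hconj : ∀ m < j, p m ⬝ᵥ (A *ᵥ p j) = 0 := fun m hm => (ih (by omega) m hm).2
    have hr' : ∀ m ≤ j, r m ⬝ᵥ r (j + 1) = 0 := fun m hm =>
      hcg.dotProduct_residual_succ_eq_zero hr hconj (hnd j (by omega)).2 hm
    exact ⟨hr' i (by omega), hcg.dotProduct_mulVec_dir_succ_eq_zero hA hr' hconj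
      (fun m hm => hnd m (by omega)) (by omega)⟩

theorem residual_dotProduct_eq_zero (hcg : IsCGSequence A r p) (hA : A.IsSymm) {K : ℕ}
    (hnd : ∀ k < K, r k ⬝ᵥ r k ≠ 0 ∧ p k ⬝ᵥ (A *ᵥ p k) ≠ 0) {i j : ℕ}
    (hi : i ≤ K) (hj : j ≤ K) (hij : i ≠ j) : r i ⬝ᵥ r j = 0 := by
  rcases hij.lt_or_gt with h | h
  · exact (hcg.orthogonal_and_conjugate hA hnd j hj i h).1
  · rw [dotProduct_comm]
    exact (hcg.orthogonal_and_conjugate hA hnd i hi j h).1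

end IsCGSequence

end ConjugateGradient

open ConjugateGradient in
theorem cg_residuals_orthogonal_general
    (n : ℕ) (A : Matrix (Fin n) (Fin n) ℝ) (hA : A.PosDef)
    (rs ps : ℕ → Fin n → ℝ) (K : ℕ)
    (hp0 : ps 0 = rs 0)
    (hrs : ∀ k : ℕ, rs (k + 1) =
      rs k - ((rs k ⬝ᵥ rs k) / (ps k ⬝ᵥ (A *ᵥ ps k))) • (A *ᵥ ps k))
    (hps : ∀ k : ℕ, ps (k + 1) =
      rs (k + 1) + ((rs (k + 1) ⬝ᵥ rs (k + 1)) / (rs k ⬝ᵥ rs k)) • ps k)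
    (hbd : ∀ j ≤ K, rs j ≠ 0 ∧ ps j ≠ 0) :
    ∀ i ≤ K, ∀ j ≤ K, i ≠ j → rs i ⬝ᵥ rs j = 0 := by
  have hcg : IsCGSequence A rs ps := ⟨hp0, hrs, hps⟩
  have hnd : ∀ k < K, rs k ⬝ᵥ rs k ≠ 0 ∧ ps k ⬝ᵥ (A *ᵥ ps k) ≠ 0 := fun k hk =>
    ⟨dotProduct_self_eq_zero.not.mpr (hbd k hk.le).1,
      by simpa using (hA.dotProduct_mulVec_pos (hbd k hk.le).2).ne'⟩
  exact fun i hi j hj hij =>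
    hcg.residual_dotProduct_eq_zero (isHermitian_iff_isSymm.mp hA.isHermitian) hnd hi hj hij

/-- In CG, the residual vectors are pairwise orthogonal. -/
theorem cg_residuals_orthogonal
    (n : ℕ) (A : Matrix (Fin n) (Fin n) ℝ) (hA : A.PosDef)
    (b x : Fin n → ℝ) (hx : A *ᵥ x = b)
    (xs rs ps : ℕ → Fin n → ℝ) (K : ℕ)
    (hr0 : rs 0 = b - A *ᵥ xs 0) (hp0 : ps 0 = rs 0)
    (hxs : ∀ k : ℕ, xs (k + 1) =
      xs k + ((rs k ⬝ᵥ rs k) / (ps k ⬝ᵥ (A *ᵥ ps k))) • ps k)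
    (hrs : ∀ k : ℕ, rs (k + 1) =
      rs k - ((rs k ⬝ᵥ rs k) / (ps k ⬝ᵥ (A *ᵥ ps k))) • (A *ᵥ ps k))
    (hps : ∀ k : ℕ, ps (k + 1) =
      rs (k + 1) + ((rs (k + 1) ⬝ᵥ rs (k + 1)) / (rs k ⬝ᵥ rs k)) • ps k)
    (hbd : ∀ j ≤ K, rs j ≠ 0 ∧ ps j ≠ 0) :
    ∀ i ≤ K, ∀ j ≤ K, i ≠ j → rs i ⬝ᵥ rs j = 0 :=
  cg_residuals_orthogonal_general n A hA rs ps K hp0 hrs hps hbd
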